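/- arXiv:2603.20790 — 4 statements merged into one kernel-verified Lean document; each statement's English description precedes it below -/
import Mathlib

section
/- Let w be a word over an alphabet Σ, u a nonempty word, j ∈ {1,...,|w|} and i ∈ {1,...,|u|}. If w[j] = u[i], then C(w[1..j], u[1..i]) = C(w[1..j-1], u[1..i-1]) ∪ { v·w[j] : v ∈ C(w[1..j-1], u[1..i]) }, and if w[j] ≠ u[i], then C(w[1..j], u[1..i]) = { v·w[j] : v ∈ C(w[1..j-1], u[1..i]) } (where w[1..0] = ε and u[1..0] = ε, and C(x,y) = ∅ whenever y is not a scattered factor of x). -/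
def IsEmbedding {α : Type*} (w u : List α) (e : Fin u.length → Fin w.length) : Prop :=
  StrictMono e ∧ ∀ i : Fin u.length, u.get i = w.get (e i)

def InShuffle {α : Type*} (u v w : List α) : Prop :=
  w.length = u.length + v.length ∧
    ∃ (e₁ : Fin u.length → Fin w.length) (e₂ : Fin v.length → Fin w.length),
      IsEmbedding w u e₁ ∧ IsEmbedding w v e₂ ∧ ∀ i j, e₁ i ≠ e₂ j

def CompSet {α : Type*} (w u : List α) : Set (List α) := {v | InShuffle u v w}

/-! The two embeddings of a shuffle partition the positions of `w ++ [a]`, so the last position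
is hit by exactly one of them, and by monotonicity it is the image of the last letter of that
factor. Deleting this letter from `w` and from that factor leaves a shuffle, and conversely
appending a common letter to `w` and to either factor preserves shuffles. -/

theorem Fintype.exists_eq_or_exists_eq_of_card_eq_add {ι κ γ : Type*} [Fintype ι] [Fintype κ]
    [Fintype γ] (hcard : Fintype.card γ = Fintype.card ι + Fintype.card κ) {f : ι → γ}
    {g : κ → γ} (hf : f.Injective) (hg : g.Injective) (hfg : ∀ i k, f i ≠ g k) (c : γ) :
    (∃ i, f i = c) ∨ ∃ k, g k = c := by
  have hbij : (Sum.elim f g).Bijective :=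
    (Fintype.bijective_iff_injective_and_card _).2 ⟨hf.sumElim hg hfg, by simp [hcard]⟩
  obtain ⟨i | k, rfl⟩ := hbij.2 c
  exacts [.inl ⟨i, rfl⟩, .inr ⟨k, rfl⟩]

section Shuffle

variable {α : Type*} {u v w : List α} {a : α}

theorem InShuffle.symm (h : InShuffle u v w) : InShuffle v u w := by
  obtain ⟨hl, e₁, e₂, h₁, h₂, hd⟩ := h
  exact ⟨by omega, e₂, e₁, h₂, h₁, fun i j => (hd j i).symm⟩

namespace IsEmbedding

theorem append_right {e : Fin u.length → Fin w.length} (he : IsEmbedding w u e) (x : List α) :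
    IsEmbedding (w ++ x) u (Fin.castLE (by simp) ∘ e) :=
  ⟨(Fin.strictMono_castLE _).comp he.1, fun i => by simpa [List.getElem_append_left] using he.2 i⟩

theorem append_singleton {e : Fin u.length → Fin w.length} (he : IsEmbedding w u e) (a : α) :
    IsEmbedding (w ++ [a]) (u ++ [a]) fun i =>
      if h : (i : ℕ) < u.length then Fin.castLE (by simp) (e ⟨i, h⟩) else ⟨w.length, by simp⟩ := by
  refine ⟨fun i j hij => ?_, fun i => ?_⟩ <;> dsimp only
  · have hj : (j : ℕ) < u.length + 1 := by simpa using j.isLt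
    have hlt : (i : ℕ) < j := hij
    split_ifs with hi hj'
    · exact he.1 (Fin.mk_lt_mk.2 hlt)
    · exact (e _).isLt
    all_goals omega
  · split_ifs with hi
    · simpa [List.getElem_append_left hi] using he.2 ⟨i, hi⟩
    · have : (i : ℕ) = u.length := by have := i.isLt; simp at this; omega
      simp [this]

theorem of_append {y : List α} {e : Fin (u ++ y).length → Fin w.length}
    (he : IsEmbedding w (u ++ y) e) : IsEmbedding w u (e ∘ Fin.castLE (by simp)) :=
  ⟨he.1.comp (Fin.strictMono_castLE _), fun i => by simpa using he.2 (Fin.castLE _ i)⟩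

theorem codRestrict {x : List α} {e : Fin u.length → Fin (w ++ x).length}
    (he : IsEmbedding (w ++ x) u e) (h : ∀ i, (e i : ℕ) < w.length) :
    IsEmbedding w u fun i => ⟨e i, h i⟩ :=
  ⟨fun _ _ hij => he.1 hij, fun i => by simpa [List.getElem_append_left (h i)] using he.2 i⟩

end IsEmbedding

theorem InShuffle.append_singleton_left (h : InShuffle u v w) :
    InShuffle (u ++ [a]) v (w ++ [a]) := by
  obtain ⟨hl, e₁, e₂, h₁, h₂, hd⟩ := h
  refine ⟨by simp [hl]; omega, _, _, h₁.append_singleton a, h₂.append_right [a], fun i j => ?_⟩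
  split_ifs
  · exact fun h => hd _ j (Fin.castLE_injective _ h)
  · exact fun h => (e₂ j).isLt.ne (congrArg Fin.val h).symm

theorem exists_eq_append_singleton_of_last {e₁ : Fin u.length → Fin (w ++ [a]).length}
    {e₂ : Fin v.length → Fin (w ++ [a]).length} (hl : (w ++ [a]).length = u.length + v.length)
    (h₁ : IsEmbedding (w ++ [a]) u e₁) (h₂ : IsEmbedding (w ++ [a]) v e₂)
    (hd : ∀ i j, e₁ i ≠ e₂ j) {i₀ : Fin u.length} (hi₀ : (e₁ i₀ : ℕ) = w.length) :
    ∃ u', u = u' ++ [a] ∧ InShuffle u' v w := by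
  obtain rfl | ⟨u, b, rfl⟩ := u.eq_nil_or_concat'
  · exact i₀.elim0
  let top : Fin (u ++ [b]).length := ⟨u.length, by simp⟩
  have htop : (e₁ top : ℕ) = w.length := by
    have hi₀top : i₀ ≤ top := Fin.le_def.2 (by simpa [top, Nat.lt_succ_iff] using i₀.isLt)
    have := Fin.le_def.1 (h₁.1.monotone hi₀top)
    have := (e₁ top).isLt
    simp only [List.length_append, List.length_singleton] at this
    omega
  have hba : b = a := by simpa [top, htop] using h₁.2 top
  have hu : ∀ i : Fin u.length, (e₁ (Fin.castLE (by simp) i) : ℕ) < w.length := fun i =>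
    htop ▸ Fin.lt_def.1 (h₁.1 (Fin.lt_def.2 i.isLt : Fin.castLE _ i < top))
  have hv : ∀ j, (e₂ j : ℕ) < w.length := fun j => by
    have hne : (e₂ j : ℕ) ≠ w.length := fun h => hd top j (Fin.ext (htop.trans h.symm))
    have := (e₂ j).isLt
    simp only [List.length_append, List.length_singleton] at this
    omega
  refine ⟨u, by rw [hba], by simp at hl; omega, _, _, h₁.of_append.codRestrict hu,
    h₂.codRestrict hv, fun i j h => hd _ j (Fin.ext (Fin.mk.inj h))⟩

theorem inShuffle_append_singleton_iff :
    InShuffle u v (w ++ [a]) ↔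
      (∃ u', u = u' ++ [a] ∧ InShuffle u' v w) ∨ ∃ v', v = v' ++ [a] ∧ InShuffle u v' w := by
  refine ⟨fun ⟨hl, e₁, e₂, h₁, h₂, hd⟩ => ?_, ?_⟩
  · rcases Fintype.exists_eq_or_exists_eq_of_card_eq_add (by simpa using hl) h₁.1.injective
      h₂.1.injective hd ⟨w.length, by simp⟩ with ⟨i, hi⟩ | ⟨j, hj⟩
    · exact .inl (exists_eq_append_singleton_of_last hl h₁ h₂ hd (by rw [hi]))
    · obtain ⟨v', rfl, h⟩ := exists_eq_append_singleton_of_last (by omega) h₂ h₁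
        (fun j i => (hd i j).symm) (by rw [hj])
      exact .inr ⟨v', rfl, h.symm⟩
  · rintro (⟨u', rfl, h⟩ | ⟨v', rfl, h⟩)
    exacts [h.append_singleton_left, h.symm.append_singleton_left.symm]

theorem compSet_append_singleton (w u : List α) (a b : α) :
    CompSet (w ++ [a]) (u ++ [b]) =
      {v | b = a ∧ v ∈ CompSet w u} ∪ (· ++ [a]) '' CompSet w (u ++ [b]) := by
  ext v
  simp only [CompSet, Set.mem_union, Set.mem_image, Set.mem_ofPred_eq,
    inShuffle_append_singleton_iff, List.append_singleton_inj]
  grind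

end Shuffle

/-- Recurrence for the complement scattered factor sets of prefixes
(positions are 1-indexed in the informal statement; `w[j]` is `w[j-1]'_` here). -/
theorem stmt0 {α : Type*} (w u : List α)
    (j i : ℕ) (hj1 : 1 ≤ j) (hjw : j ≤ w.length) (hi1 : 1 ≤ i) (hiu : i ≤ u.length) :
    (w[j-1]'(by omega) = u[i-1]'(by omega) →
      CompSet (w.take j) (u.take i) =
        CompSet (w.take (j-1)) (u.take (i-1)) ∪
          (fun v => v ++ [w[j-1]'(by omega)]) '' CompSet (w.take (j-1)) (u.take i)) ∧
    (w[j-1]'(by omega) ≠ u[i-1]'(by omega) →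
      CompSet (w.take j) (u.take i) =
        (fun v => v ++ [w[j-1]'(by omega)]) '' CompSet (w.take (j-1)) (u.take i)) := by
  obtain ⟨j, rfl⟩ : ∃ k, j = k + 1 := ⟨j - 1, by omega⟩
  obtain ⟨i, rfl⟩ : ∃ k, i = k + 1 := ⟨i - 1, by omega⟩
  simp only [Nat.add_sub_cancel]
  rw [← List.take_append_getElem (by omega : j < w.length),
    ← List.take_append_getElem (by omega : i < u.length), compSet_append_singleton]
  exact ⟨fun h => by simp [h], fun h => by simp [Ne.symm h]⟩
end

section
/- Let w be a word over Σ = alph(w) and u a scattered factor of w with |u| ≤ ι(w), where ι(w) is the universality index of w. Then the number of embeddings of u in w satisfies |E(w,u)| ≥ binom(ι(w), |u|). -/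
/-- `w` is `k`-universal: every word of length `k` over `alph w` is a
scattered factor of `w`. -/
def IsKUniversal {α : Type*} (w : List α) (k : ℕ) : Prop :=
  ∀ u : List α, u.length = k → (∀ a ∈ u, a ∈ w) → u.Sublist w

/-!
A `k`-universal word `w` factors greedily into `k` arches, each a factor containing every letter
of `w`, followed by a remainder. For every choice of `|u|` of these arches, reading the `j`-th
letter of `u` inside the `j`-th chosen arch gives an embedding of `u` in `w`, and distinct choices
give distinct embeddings because the arch containing the image of each position can be read off
from the embedding.
-/

open Function

section Arches

variable {α : Type*}

def IsUniversalOver (A : List α) (k : ℕ) (y : List α) : Prop :=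
  ∀ v : List α, v.length = k → (∀ a ∈ v, a ∈ A) → v.Sublist y

lemma List.Sublist.sublist_drop_idxOf_succ [DecidableEq α] {a : α} {u : List α} :
    ∀ {y : List α}, (a :: u).Sublist y → u.Sublist (y.drop (y.idxOf a + 1))
  | [], h => by simp at h
  | b :: y, h => by
    by_cases hab : b = a
    · subst hab
      cases h with
      | cons _ h => simpa using (List.sublist_cons_self b u).trans h
      | cons_cons _ h => simpa using h
    · have h : (a :: u).Sublist y := by
        cases h with
        | cons _ h => exact h
        | cons_cons _ h => exact absurd rfl hab
      simpa [List.idxOf_cons_ne _ hab] using h.sublist_drop_idxOf_succ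

/-- The witness `x` is the first arch of `y`: it ends where the last letter of `A` to appear in `y`
occurs for the first time. -/
lemma IsUniversalOver.exists_append {A : List α} {k : ℕ} {y : List α}
    (h : IsUniversalOver A (k + 1) y) :
    ∃ x z, y = x ++ z ∧ (∀ a ∈ A, a ∈ x) ∧ IsUniversalOver A k z := by
  classical
  by_cases hA : A = []
  · refine ⟨[], y, rfl, by simp [hA], ?_⟩
    rintro (_ | ⟨a, v⟩) _ hv
    · exact List.nil_sublist y
    · exact absurd (hv a List.mem_cons_self) (by simp [hA])
  have hmem : ∀ a ∈ A, a ∈ y := fun a ha =>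
    (h (List.replicate (k + 1) a) (by simp) (by simp [ha])).subset (by simp)
  obtain ⟨a, haA, hmax⟩ := Finset.exists_max_image A.toFinset y.idxOf
    ⟨A.head hA, by simp⟩
  rw [List.mem_toFinset] at haA
  refine ⟨y.take (y.idxOf a + 1), y.drop (y.idxOf a + 1), (List.take_append_drop _ _).symm,
    fun b hb => ?_, fun v hv hvA => ?_⟩
  · have hby := List.idxOf_lt_length_iff.2 (hmem b hb)
    have hba := hmax b (List.mem_toFinset.2 hb)
    exact List.mem_take_iff_getElem.2 ⟨y.idxOf b, by omega, List.getElem_idxOf hby⟩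
  · refine (h (a :: v) (by simp [hv]) ?_).sublist_drop_idxOf_succ
    simpa [haA] using hvA

lemma IsUniversalOver.exists_flatten_append {A : List α} {k : ℕ} {y : List α}
    (h : IsUniversalOver A k y) :
    ∃ (parts : List (List α)) (rest : List α),
      y = parts.flatten ++ rest ∧ parts.length = k ∧ ∀ x ∈ parts, ∀ a ∈ A, a ∈ x := by
  induction k generalizing y with
  | zero => exact ⟨[], y, rfl, rfl, by simp⟩
  | succ k ih =>
    obtain ⟨x, z, rfl, hx, hz⟩ := h.exists_append
    obtain ⟨parts, rest, rfl, rfl, hparts⟩ := ih hz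
    exact ⟨x :: parts, rest, by simp, rfl, List.forall_mem_cons.2 ⟨hx, hparts⟩⟩

end Arches

section Blocks

variable {α : Type*} (parts : List (List α))

def blockStart (s : ℕ) : ℕ := (parts.take s).flatten.length

lemma blockStart_mono : Monotone (blockStart parts) := by
  refine monotone_nat_of_le_succ fun s => ?_
  simp only [blockStart, List.take_add_one, List.flatten_append, List.length_append]
  omega

lemma blockStart_succ {s : ℕ} (hs : s < parts.length) :
    blockStart parts (s + 1) = blockStart parts s + parts[s].length := by
  rw [blockStart, blockStart, List.take_add_one, List.getElem?_eq_getElem hs]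
  simp only [Option.toList_some, List.flatten_append, List.flatten_cons, List.flatten_nil,
    List.append_nil, List.length_append]

lemma blockStart_length : blockStart parts parts.length = parts.flatten.length := by
  simp [blockStart]

variable {parts}

lemma blockStart_add_lt_blockStart_add {s s' t : ℕ} (t' : ℕ) (hs : s < parts.length)
    (ht : t < parts[s].length) (hss' : s < s') :
    blockStart parts s + t < blockStart parts s' + t' :=
  calc blockStart parts s + t < blockStart parts (s + 1) := by rw [blockStart_succ parts hs]; omega
    _ ≤ blockStart parts s' := blockStart_mono parts hss'
    _ ≤ blockStart parts s' + t' := Nat.le_add_right _ _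

lemma eq_of_blockStart_add_eq {s s' t t' : ℕ} (hs : s < parts.length) (hs' : s' < parts.length)
    (ht : t < parts[s].length) (ht' : t' < parts[s'].length)
    (h : blockStart parts s + t = blockStart parts s' + t') : s = s' := by
  by_contra hne
  rcases Nat.lt_or_gt_of_ne hne with hlt | hlt
  · exact (blockStart_add_lt_blockStart_add t' hs ht hlt).ne h
  · exact (blockStart_add_lt_blockStart_add t hs' ht' hlt).ne h.symm

lemma blockStart_add_lt_length (rest : List α) {s t : ℕ} (hs : s < parts.length)
    (ht : t < parts[s].length) : blockStart parts s + t < (parts.flatten ++ rest).length := by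
  have := blockStart_add_lt_blockStart_add 0 hs ht hs
  rw [blockStart_length] at this
  simp only [List.length_append]
  omega

lemma getElem_flatten_append_blockStart_add (rest : List α) {s t : ℕ} (hs : s < parts.length)
    (ht : t < parts[s].length) :
    (parts.flatten ++ rest)[blockStart parts s + t]'(blockStart_add_lt_length rest hs ht) =
      parts[s][t] := by
  have hsplit : parts.flatten ++ rest =
      (parts.take s).flatten ++ (parts[s] ++ ((parts.drop (s + 1)).flatten ++ rest)) := by
    conv_lhs => rw [← List.take_append_drop s parts, List.drop_eq_getElem_cons hs]
    simp only [List.flatten_append, List.flatten_cons, List.append_assoc]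
  rw [List.getElem_of_eq hsplit, List.getElem_append_right (by simp [blockStart]),
    List.getElem_append_left (by simpa [blockStart] using ht)]
  simp [blockStart]

lemma exists_isEmbedding_blockwise (rest : List α) {u : List α}
    (g : Fin u.length → Fin parts.length) (hg : StrictMono g) (hu : ∀ j, u[j] ∈ parts[g j]) :
    ∃ e : Fin u.length → Fin (parts.flatten ++ rest).length,
      IsEmbedding (parts.flatten ++ rest) u e ∧
        ∀ j, ∃ t < parts[g j].length, (e j : ℕ) = blockStart parts (g j) + t := by
  choose t ht hget using fun j => List.mem_iff_getElem.1 (hu j)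
  refine ⟨fun j => ⟨_, blockStart_add_lt_length rest (g j).isLt (ht j)⟩,
    ⟨fun j j' hjj' => ?_, fun j => ?_⟩, fun j => ⟨t j, ht j, rfl⟩⟩
  · exact blockStart_add_lt_blockStart_add _ (g j).isLt (ht j) (hg hjj')
  · simp only [List.get_eq_getElem]
    rw [getElem_flatten_append_blockStart_add]
    exact (hget j).symm

end Blocks

lemma Nat.card_orderEmbedding_fin (n k : ℕ) : Nat.card (Fin n ↪o Fin k) = k.choose n := by
  rw [Nat.card_congr Set.powersetCard.ofFinEmbEquiv, Set.powersetCard.card, Nat.card_fin]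

theorem choose_length_le_ncard_isEmbedding {α : Type*} (parts : List (List α)) (rest : List α)
    {u : List α} (hu : ∀ x ∈ parts, ∀ a ∈ u, a ∈ x) :
    parts.length.choose u.length ≤
      {e : Fin u.length → Fin (parts.flatten ++ rest).length |
        IsEmbedding (parts.flatten ++ rest) u e}.ncard := by
  choose e he hblock using fun g : Fin u.length ↪o Fin parts.length =>
    exists_isEmbedding_blockwise rest g g.strictMono
      fun j => hu _ (List.getElem_mem _) _ (List.getElem_mem _)
  have hinj :
      Injective fun g => (⟨e g, he g⟩ : {e | IsEmbedding (parts.flatten ++ rest) u e}) := by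
    intro g g' hgg'
    ext j
    obtain ⟨t, ht, hgt⟩ := hblock g j
    obtain ⟨t', ht', hgt'⟩ := hblock g' j
    have hej : (e g j : ℕ) = e g' j := by rw [Subtype.mk.inj hgg']
    exact eq_of_blockStart_add_eq (g j).isLt (g' j).isLt ht ht' (hgt ▸ hgt' ▸ hej)
  rw [← Nat.card_orderEmbedding_fin, ← Nat.card_coe_set_eq]
  exact Nat.card_le_card_of_injective _ hinj

theorem stmt7_general {α : Type*} (w : List α) (k : ℕ)
    (hk : IsKUniversal w k)
    (u : List α) (hu : u.Sublist w) :
    Nat.choose k u.length ≤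
      {e : Fin u.length → Fin w.length | IsEmbedding w u e}.ncard := by
  obtain ⟨parts, rest, rfl, rfl, harch⟩ := IsUniversalOver.exists_flatten_append (A := w) hk
  exact choose_length_le_ncard_isEmbedding parts rest fun x hx a ha => harch x hx a (hu.subset ha)

/-- If `u` is a scattered factor of `w` with `|u| ≤ ι(w)` (here `ι(w) = k` is
pinned by `w` being `k`-universal but not `(k+1)`-universal), then
`|E(w,u)| ≥ binom(ι(w), |u|)`. -/
theorem stmt7 {α : Type*} (w : List α) (k : ℕ)
    (hk : IsKUniversal w k) (hk' : ¬ IsKUniversal w (k + 1))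
    (u : List α) (hu : u.Sublist w) (hlen : u.length ≤ k) :
    Nat.choose k u.length ≤
      {e : Fin u.length → Fin w.length | IsEmbedding w u e}.ncard :=
  stmt7_general w k hk u hu
end

section
/- For a word w over Σ the following are equivalent: (i) w contains no letter square (no factor aa for a letter a ∈ Σ); (ii) every scattered factor u of w with |C(w,u)| = 1 has exactly one embedding in w. -/
open List

section MaskSelect

variable {α : Type*}

def maskSelect (c : Bool) (w : List α) (s : List Bool) : List α :=
  ((w.zip s).filter (·.2 == c)).map Prod.fst

@[simp] lemma maskSelect_nil_left (c : Bool) (s : List Bool) :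
    maskSelect c ([] : List α) s = [] := rfl

@[simp] lemma maskSelect_nil_right (c : Bool) (w : List α) : maskSelect c w [] = [] := by
  simp [maskSelect]

@[simp] lemma maskSelect_cons_cons (c : Bool) (x : α) (w : List α) (b : Bool) (s : List Bool) :
    maskSelect c (x :: w) (b :: s) = if b = c then x :: maskSelect c w s else maskSelect c w s := by
  by_cases h : b = c <;> simp [maskSelect, h]

lemma maskSelect_append (c : Bool) {w₁ w₂ : List α} {s₁ s₂ : List Bool}
    (h : s₁.length = w₁.length) :
    maskSelect c (w₁ ++ w₂) (s₁ ++ s₂) =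
      maskSelect c w₁ s₁ ++ maskSelect c w₂ s₂ := by
  simp [maskSelect, zip_append h.symm]

lemma maskSelect_replicate (c b : Bool) (w : List α) :
    maskSelect c w (replicate w.length b) = if b = c then w else [] := by
  induction w with
  | nil => simp
  | cons x w ih => by_cases h : b = c <;> simp_all [replicate_succ]

lemma maskSelect_false_eq_true_map_not (w : List α) (s : List Bool) :
    maskSelect false w s = maskSelect true w (s.map not) := by
  induction w generalizing s with
  | nil => simp
  | cons x w ih => cases s with
    | nil => simp
    | cons b s => cases b <;> simp [ih]

lemma perm_maskSelect_append {w : List α} {s : List Bool} (hs : s.length = w.length) :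
    maskSelect true w s ++ maskSelect false w s ~ w := by
  induction w generalizing s with
  | nil => simp
  | cons x w ih =>
    obtain _ | ⟨b, s⟩ := s
    · simp at hs
    · cases b
      · simpa using perm_middle.trans ((ih (by simpa using hs)).cons x)
      · simpa using (ih (by simpa using hs)).cons x

def selectingMasks (w u : List α) : Set (List Bool) :=
  {s | s.length = w.length ∧ maskSelect true w s = u}

@[simp] lemma mem_selectingMasks {w u : List α} {s : List Bool} :
    s ∈ selectingMasks w u ↔ s.length = w.length ∧ maskSelect true w s = u := Iff.rfl

end MaskSelect

section Embeddings

variable {α : Type*}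

def imageMask {m n : ℕ} (e : Fin m → Fin n) : List Bool :=
  (finRange n).map fun i => decide (∃ j, e j = i)

@[simp] lemma length_imageMask {m n : ℕ} (e : Fin m → Fin n) : (imageMask e).length = n := by
  simp [imageMask]

@[simp] lemma getElem?_imageMask {m n : ℕ} (e : Fin m → Fin n) (i : Fin n) :
    (imageMask e)[(i : ℕ)]? = some (decide (∃ j, e j = i)) := by
  simp [imageMask]

lemma maskSelect_eq_map_filter {w : List α} {s : List Bool} (hs : s.length = w.length) (c : Bool) :
    maskSelect c w s = ((finRange w.length).filter fun i => s[i.val]? == some c).map w.get := by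
  have hzip : w.zip s = (finRange w.length).map fun i => (w.get i, s[i.val]'(hs.symm ▸ i.2)) := by
    apply ext_getElem (by simp [hs])
    intro k _ _
    simp
  simp only [maskSelect, hzip, filter_map, map_map]
  congr 1
  apply filter_congr
  intro i _
  simp [getElem?_eq_getElem (hs.symm ▸ i.2 : i.val < s.length)]

lemma filter_finRange_eq_ofFn {m n : ℕ} {e : Fin m → Fin n} (he : StrictMono e) :
    (finRange n).filter (fun i => decide (∃ j, e j = i)) = ofFn e :=
  ((pairwise_lt_finRange n).filter _).eq_of_mem_iff (sortedLT_ofFn_iff.mpr he).pairwise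
    (by simp [eq_comm])

lemma maskSelect_true_imageMask {w u : List α} {e : Fin u.length → Fin w.length}
    (he : IsEmbedding w u e) : maskSelect true w (imageMask e) = u := by
  rw [maskSelect_eq_map_filter (length_imageMask e)]
  simp only [getElem?_imageMask, Option.some_beq_some, beq_true]
  rw [filter_finRange_eq_ofFn he.1, map_ofFn]
  conv_rhs => rw [← ofFn_get u]
  exact congrArg ofFn (funext fun i => (he.2 i).symm)

lemma imageMask_injOn {m n : ℕ} : Set.InjOn (imageMask (m := m) (n := n)) {e | StrictMono e} := by
  intro e he e' he' h
  refine (StrictMono.range_inj he he').mp (Set.ext fun i => ?_)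
  have hi := congrArg (·[(i : ℕ)]?) h
  simp only [getElem?_imageMask, Option.some.injEq, decide_eq_decide] at hi
  exact hi

lemma exists_isEmbedding_imageMask_eq {w u : List α} {s : List Bool}
    (hs : s ∈ selectingMasks w u) :
    ∃ e, IsEmbedding w u e ∧ imageMask e = s := by
  obtain ⟨hs, rfl⟩ := hs
  set L := (finRange w.length).filter fun i => s[i.val]? == some true
  have hu : maskSelect true w s = L.map w.get := maskSelect_eq_map_filter hs true
  have hlen : (maskSelect true w s).length = L.length := by rw [hu, length_map]
  have hL : L.SortedLT := sortedLT_iff_pairwise.mpr ((pairwise_lt_finRange _).filter _)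
  refine ⟨fun j => L.get (j.cast hlen), ⟨fun _ _ h => hL.strictMono_get h, fun j => ?_⟩, ?_⟩
  · simp [hu]
  · refine ext_getElem? fun k => ?_
    by_cases hk : k < w.length
    · have hrange : (∃ j, L.get (Fin.cast hlen j) = ⟨k, hk⟩) ↔ ⟨k, hk⟩ ∈ L :=
        ⟨fun ⟨j, hj⟩ => mem_iff_get.mpr ⟨_, hj⟩,
          fun h => let ⟨j, hj⟩ := mem_iff_get.mp h; ⟨Fin.cast hlen.symm j, hj⟩⟩
      rw [show k = (⟨k, hk⟩ : Fin w.length).val from rfl, getElem?_imageMask]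
      simp only [hrange, L]
      simp [getElem?_eq_getElem (show k < s.length by omega)]
    · simp [hs, not_lt.mp hk]

lemma image_imageMask_setOf_isEmbedding (w u : List α) :
    imageMask '' {e | IsEmbedding w u e} = selectingMasks w u := by
  ext s
  constructor
  · rintro ⟨e, he, rfl⟩
    exact ⟨length_imageMask e, maskSelect_true_imageMask he⟩
  · intro hs
    obtain ⟨e, he, rfl⟩ := exists_isEmbedding_imageMask_eq hs
    exact ⟨e, he, rfl⟩

lemma ncard_setOf_isEmbedding (w u : List α) :
    {e | IsEmbedding w u e}.ncard = (selectingMasks w u).ncard := by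
  rw [← image_imageMask_setOf_isEmbedding, (imageMask_injOn.mono fun e he => he.1).ncard_image]

lemma inShuffle_iff {u v w : List α} :
    InShuffle u v w ↔ ∃ s ∈ selectingMasks w u, maskSelect false w s = v := by
  constructor
  · rintro ⟨hlen, e₁, e₂, he₁, he₂, hdisj⟩
    have hsurj : ∀ i, (∃ j, e₁ j = i) ∨ ∃ j, e₂ j = i := by
      have hbij := (he₁.1.injective.sumElim he₂.1.injective hdisj).bijective_of_nat_card_le
        (by simp [hlen])
      intro i
      obtain ⟨j | j, hj⟩ := hbij.2 i
      exacts [Or.inl ⟨j, hj⟩, Or.inr ⟨j, hj⟩]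
    refine ⟨imageMask e₁, ⟨length_imageMask e₁, maskSelect_true_imageMask he₁⟩, ?_⟩
    rw [maskSelect_false_eq_true_map_not, ← maskSelect_true_imageMask he₂, imageMask, imageMask,
      map_map]
    congr 1
    refine map_congr_left fun i _ => ?_
    have hcompl : (∃ j, e₂ j = i) ↔ ¬ ∃ j, e₁ j = i :=
      ⟨fun ⟨j, hj⟩ ⟨j', hj'⟩ => hdisj j' j (hj'.trans hj.symm), (hsurj i).resolve_left⟩
    simp only [Function.comp_apply, hcompl, decide_not]
  · rintro ⟨s, hs, rfl⟩
    obtain ⟨e₁, he₁, h₁⟩ := exists_isEmbedding_imageMask_eq hs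
    obtain ⟨e₂, he₂, h₂⟩ := exists_isEmbedding_imageMask_eq (w := w) (s := s.map not)
      ⟨by simpa using hs.1, (maskSelect_false_eq_true_map_not w s).symm⟩
    refine ⟨?_, e₁, e₂, he₁, he₂, fun i j hij => ?_⟩
    · simpa [hs.2] using (perm_maskSelect_append hs.1).length_eq.symm
    · have hi := congrArg (·[(e₁ i : ℕ)]?) h₁
      have hj := congrArg (·[(e₂ j : ℕ)]?) h₂
      simp only [getElem?_imageMask, exists_apply_eq_apply, decide_true, getElem?_map] at hi hj
      rw [← hij, ← hi] at hj
      simp at hj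

lemma compSet_eq_image_maskSelect_false (w u : List α) :
    CompSet w u = maskSelect false w '' selectingMasks w u := by
  ext v
  exact inShuffle_iff

end Embeddings

section SquareFree

variable {α : Type*}

def flipFirstTrue : List Bool → List Bool
  | [] => []
  | true :: s => false :: s
  | false :: s => false :: flipFirstTrue s

@[simp] lemma length_flipFirstTrue : ∀ s : List Bool, (flipFirstTrue s).length = s.length
  | [] => rfl
  | true :: _ => rfl
  | false :: s => by simp [flipFirstTrue, length_flipFirstTrue s]

lemma maskSelect_true_flipFirstTrue {w : List α} {s : List Bool} {c : α} {u : List α}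
    (h : maskSelect true w s = c :: u) : maskSelect true w (flipFirstTrue s) = u := by
  induction w generalizing s with
  | nil => simp at h
  | cons x w ih =>
    obtain _ | ⟨_ | _, s⟩ := s
    · simp at h
    · simpa [flipFirstTrue] using ih (by simpa using h)
    · simp_all [flipFirstTrue]

lemma maskSelect_false_flipFirstTrue_ne_cons {c d : α} {w u v : List α} {s : List Bool}
    (hcd : c ≠ d) (h : maskSelect true (d :: w) s = c :: u) :
    maskSelect false (d :: w) (flipFirstTrue s) ≠ c :: v := by
  obtain _ | ⟨_ | _, s⟩ := s <;> simp_all [flipFirstTrue, Ne.symm hcd]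

lemma not_subsingleton_image_maskSelect_false_cons {c : α} {w u : List α} {s : List Bool}
    (hw : (c :: w).IsChain (· ≠ ·)) (hs : s.length = w.length)
    (h : maskSelect true w s = c :: u) :
    ¬ (maskSelect false (c :: w) '' selectingMasks (c :: w) (c :: u)).Subsingleton := by
  obtain _ | ⟨d, w⟩ := w
  · simp at h
  have hcd : c ≠ d := (isChain_cons_cons.mp hw).1
  intro hsub
  refine maskSelect_false_flipFirstTrue_ne_cons hcd h
    (hsub ⟨true :: flipFirstTrue s, ?_, rfl⟩ ⟨false :: s, ?_, rfl⟩)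
  · simp [hs, maskSelect_true_flipFirstTrue h]
  · simp [hs, h]

theorem subsingleton_selectingMasks_of_isChain {w u : List α} (hw : w.IsChain (· ≠ ·))
    (h : (maskSelect false w '' selectingMasks w u).Subsingleton) :
    (selectingMasks w u).Subsingleton := by
  induction w generalizing u with
  | nil =>
    rintro s ⟨hs, -⟩ s' ⟨hs', -⟩
    simp_all
  | cons c w ih =>
    rintro (_ | ⟨b, s⟩) ⟨hs, rfl⟩ (_ | ⟨b', s'⟩) ⟨hs', hs'u⟩ <;> simp at hs hs'
    by_cases hb : b = b'
    · subst hb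
      have hsub : (maskSelect false w '' selectingMasks w (maskSelect true w s)).Subsingleton := by
        rintro _ ⟨t, ⟨ht, htu⟩, rfl⟩ _ ⟨t', ⟨ht', ht'u⟩, rfl⟩
        have := h ⟨b :: t, by simp [ht, htu], rfl⟩ ⟨b :: t', by simp [ht', ht'u], rfl⟩
        cases b <;> simpa using this
      rw [ih hw.tail hsub ⟨hs, rfl⟩ ⟨hs', by cases b <;> simpa using hs'u⟩]
    obtain rfl : b' = !b := by cases b <;> cases b' <;> simp_all
    cases b
    · have hsel : maskSelect true w s = c :: maskSelect true w s' := by simpa using hs'u.symm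
      rw [maskSelect_cons_cons, if_neg Bool.false_ne_true, hsel] at h
      exact absurd h (not_subsingleton_image_maskSelect_false_cons hw hs hsel)
    · rw [maskSelect_cons_cons, if_pos rfl] at h
      exact absurd h (not_subsingleton_image_maskSelect_false_cons hw hs' (by simpa using hs'u))

end SquareFree

section Squares

variable {α : Type*}

lemma isChain_ne_of_not_exists_square {w : List α} (h : ¬ ∃ a, [a, a] <:+: w) :
    w.IsChain (· ≠ ·) := by
  rw [isChain_iff_forall_rel_of_append_cons_cons]
  rintro a _ l₁ l₂ rfl rfl
  exact h ⟨a, l₁, l₂, by simp⟩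

variable (x t : List α) (a : α)

lemma maskSelect_false_eq_of_square {s : List Bool}
    (hs : s ∈ selectingMasks (x ++ [a, a] ++ t) (x ++ [a] ++ t)) :
    maskSelect false (x ++ [a, a] ++ t) s = [a] := by
  have hsplit : x ++ [a, a] ++ t ~ x ++ [a] ++ t ++ [a] := by
    simpa using (perm_middle (l₁ := x ++ [a]) (l₂ := t)).trans (perm_append_singleton _ _).symm
  have hperm := perm_maskSelect_append hs.1
  rw [hs.2] at hperm
  exact ((perm_append_left_iff _).mp (hperm.trans hsplit)).eq_singleton

def squareMask (b : Bool) : List Bool :=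
  replicate x.length true ++ [b, !b] ++ replicate t.length true

lemma squareMask_mem_selectingMasks (b : Bool) :
    squareMask x t b ∈ selectingMasks (x ++ [a, a] ++ t) (x ++ [a] ++ t) := by
  constructor
  · simp [squareMask]
  · cases b <;> simp [squareMask, maskSelect_append, maskSelect_replicate]

lemma image_maskSelect_false_square :
    maskSelect false (x ++ [a, a] ++ t) '' selectingMasks (x ++ [a, a] ++ t) (x ++ [a] ++ t) =
      {[a]} := by
  refine Set.eq_singleton_iff_unique_mem.mpr ⟨?_, ?_⟩
  · refine ⟨squareMask x t true, squareMask_mem_selectingMasks x t a true, ?_⟩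
    simp [squareMask, maskSelect_append, maskSelect_replicate]
  · rintro _ ⟨s, hs, rfl⟩
    exact maskSelect_false_eq_of_square x t a hs

lemma not_subsingleton_selectingMasks_square :
    ¬ (selectingMasks (x ++ [a, a] ++ t) (x ++ [a] ++ t)).Subsingleton := fun h =>
  absurd (h (squareMask_mem_selectingMasks x t a true) (squareMask_mem_selectingMasks x t a false))
    (by simp [squareMask])

end Squares

/-- `w` contains no letter square iff every scattered factor `u` of `w` with
`|C(w,u)| = 1` has exactly one embedding in `w`. -/
theorem stmt15 {α : Type*} (w : List α) :
    (¬ ∃ a : α, [a, a] <:+: w) ↔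
      ∀ u : List α, u.Sublist w → (CompSet w u).ncard = 1 →
        {e : Fin u.length → Fin w.length | IsEmbedding w u e}.ncard = 1 := by
  simp only [compSet_eq_image_maskSelect_false, ncard_setOf_isEmbedding, Set.ncard_eq_one]
  constructor
  · rintro hsq u - ⟨v, hv⟩
    obtain ⟨s, hs, -⟩ : v ∈ maskSelect false w '' selectingMasks w u := hv ▸ rfl
    have hsub := subsingleton_selectingMasks_of_isChain (isChain_ne_of_not_exists_square hsq)
      (hv ▸ Set.subsingleton_singleton)
    exact ⟨s, hsub.eq_singleton_of_mem hs⟩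
  · rintro h ⟨a, x, t, rfl⟩
    obtain ⟨s, hs⟩ := h (x ++ [a] ++ t) (by simp) ⟨[a], image_maskSelect_false_square x t a⟩
    exact not_subsingleton_selectingMasks_square x t a (hs ▸ Set.subsingleton_singleton)
end

section
/- For every word v over Σ and every w ∈ v ⧢ v, there exist embeddings e1, e2 of v in w whose images are disjoint (hence partition {1,...,|w|}) such that e1(k) < e2(k) for all k ∈ {1,...,|v|}. -/
/-!
Given disjoint embeddings `e₁, e₂` of `v` in `w`, take their pointwise minimum and maximum.
Both are again embeddings, since at each position they pick the value of `e₁` or of `e₂`;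
the minimum lies strictly below the maximum because `e₁ k ≠ e₂ k`; and a value of the
minimum never equals a value of the maximum, because it would be a common value of `e₁` or
`e₂` at two positions, which disjointness and injectivity rule out.
-/

section PointwiseMinMax

variable {ι β : Type*} [Preorder ι] [LinearOrder β] {f g : ι → β}

theorem StrictMono.pointwise_min (hf : StrictMono f) (hg : StrictMono g) :
    StrictMono fun i => min (f i) (g i) :=
  fun _ _ hij =>
    lt_min ((min_le_left _ _).trans_lt (hf hij)) ((min_le_right _ _).trans_lt (hg hij))

theorem StrictMono.pointwise_max (hf : StrictMono f) (hg : StrictMono g) :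
    StrictMono fun i => max (f i) (g i) :=
  fun _ _ hij =>
    max_lt ((hf hij).trans_le (le_max_left _ _)) ((hg hij).trans_le (le_max_right _ _))

end PointwiseMinMax

theorem min_ne_max_of_injective_of_disjoint {ι β : Type*} [LinearOrder β] {f g : ι → β}
    (hf : f.Injective) (hg : g.Injective) (hfg : ∀ i j, f i ≠ g j) (i j : ι) :
    min (f i) (g i) ≠ max (f j) (g j) := by
  intro heq
  have hmin_max : min (f i) (g i) ≠ max (f i) (g i) := (min_lt_max.2 (hfg i i)).ne
  rcases min_choice (f i) (g i) with hi | hi <;> rcases max_choice (f j) (g j) with hj | hj <;>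
    rw [hi, hj] at heq
  · obtain rfl := hf heq
    exact hmin_max (by rw [hi, hj, heq])
  · exact hfg i j heq
  · exact hfg j i heq.symm
  · obtain rfl := hg heq
    exact hmin_max (by rw [hi, hj, heq])

namespace IsEmbedding

variable {α : Type*} {w u : List α} {e₁ e₂ : Fin u.length → Fin w.length}

theorem min (h₁ : IsEmbedding w u e₁) (h₂ : IsEmbedding w u e₂) :
    IsEmbedding w u fun k => min (e₁ k) (e₂ k) :=
  ⟨h₁.1.pointwise_min h₂.1, fun i => min_rec' (fun p => u.get i = w.get p) (h₁.2 i) (h₂.2 i)⟩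

theorem max (h₁ : IsEmbedding w u e₁) (h₂ : IsEmbedding w u e₂) :
    IsEmbedding w u fun k => max (e₁ k) (e₂ k) :=
  ⟨h₁.1.pointwise_max h₂.1, fun i => max_rec' (fun p => u.get i = w.get p) (h₁.2 i) (h₂.2 i)⟩

end IsEmbedding

/-- For every `w ∈ v ⧢ v` there are disjoint embeddings `e₁, e₂` of `v` in `w`
with `e₁ k < e₂ k` for all `k`. -/
theorem stmt16 {α : Type*} (v w : List α) (h : InShuffle v v w) :
    ∃ (e₁ e₂ : Fin v.length → Fin w.length),
      IsEmbedding w v e₁ ∧ IsEmbedding w v e₂ ∧ (∀ i j, e₁ i ≠ e₂ j) ∧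
        ∀ k : Fin v.length, e₁ k < e₂ k := by
  obtain ⟨-, e₁, e₂, h₁, h₂, hd⟩ := h
  exact ⟨_, _, h₁.min h₂, h₁.max h₂,
    min_ne_max_of_injective_of_disjoint h₁.1.injective h₂.1.injective hd,
    fun k => min_lt_max.2 (hd k k)⟩
end
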